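/- arXiv:2101.06799 — 2 statements merged into one kernel-verified Lean document; each statement's English description precedes it below -/
import Mathlib

section
/- (Generalized Dinkelbach optimality condition.) Let D be a nonempty set, let K be a nonempty finite index set, and for each k ∈ K let f_k : D → ℝ and g_k : D → ℝ with g_k(x) > 0 for all x ∈ D. Fix x* ∈ D and set α* := min_{k ∈ K} f_k(x*)/g_k(x*). Then: (i) min_{k ∈ K} (f_k(x*) − α*·g_k(x*)) = 0; and (ii) x* maximizes the function x ↦ min_{k ∈ K} f_k(x)/g_k(x) over D if and only if for every x ∈ D, min_{k ∈ K} (f_k(x) − α*·g_k(x)) ≤ 0 (so that the maximum of x ↦ min_{k∈K}(f_k(x) − α*·g_k(x)) over D equals 0 and is attained at x*). -/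
open Finset

lemma gd_key {D : Type*} {K : Type*} [Fintype K] [Nonempty K]
    (f g : K → D → ℝ) (hg : ∀ k x, 0 < g k x) (α : ℝ) (x : D) :
    (Finset.univ.inf' Finset.univ_nonempty (fun k => f k x - α * g k x) ≤ 0)
      ↔ Finset.univ.inf' Finset.univ_nonempty (fun k => f k x / g k x) ≤ α := by
  rw [Finset.inf'_le_iff, Finset.inf'_le_iff]
  constructor
  · rintro ⟨k, -, hk⟩
    exact ⟨k, Finset.mem_univ k, by rw [div_le_iff₀ (hg k x)]; linarith⟩
  · rintro ⟨k, -, hk⟩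
    rw [div_le_iff₀ (hg k x)] at hk
    exact ⟨k, Finset.mem_univ k, by linarith⟩

/-- Proposition 3 (generalized Dinkelbach optimality condition): for a max–min
of finitely many ratios `f_k/g_k` with positive denominators, setting
`α* = min_k f_k(x*)/g_k(x*)`, we have (i) `min_k (f_k(x*) − α* g_k(x*)) = 0`,
and (ii) `x*` maximizes `x ↦ min_k f_k(x)/g_k(x)` iff
`min_k (f_k(x) − α* g_k(x)) ≤ 0` for every `x` (so that the parametric problem
has maximum value `0`, attained at `x*`). -/
theorem generalized_dinkelbach {D : Type*} [Nonempty D]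
    {K : Type*} [Fintype K] [Nonempty K]
    (f g : K → D → ℝ) (hg : ∀ k x, 0 < g k x) (xstar : D)
    (αstar : ℝ)
    (hα : αstar = Finset.univ.inf' Finset.univ_nonempty
      (fun k => f k xstar / g k xstar)) :
    (Finset.univ.inf' Finset.univ_nonempty
        (fun k => f k xstar - αstar * g k xstar) = 0) ∧
    ((∀ x : D,
        Finset.univ.inf' Finset.univ_nonempty (fun k => f k x / g k x)
          ≤ Finset.univ.inf' Finset.univ_nonempty
              (fun k => f k xstar / g k xstar))
      ↔ (∀ x : D,
          Finset.univ.inf' Finset.univ_nonempty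
            (fun k => f k x - αstar * g k x) ≤ 0)) ∧
    ((∀ x : D,
        Finset.univ.inf' Finset.univ_nonempty (fun k => f k x / g k x)
          ≤ Finset.univ.inf' Finset.univ_nonempty
              (fun k => f k xstar / g k xstar))
      → IsGreatest {r : ℝ | ∃ x : D, r = Finset.univ.inf' Finset.univ_nonempty
            (fun k => f k x - αstar * g k x)} 0) := by
  have hzero : Finset.univ.inf' Finset.univ_nonempty
      (fun k => f k xstar - αstar * g k xstar) = 0 := by
    apply le_antisymm
    · rw [gd_key f g hg, ← hα]
    · apply Finset.le_inf'
      intro k _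
      have h1 : αstar ≤ f k xstar / g k xstar := by
        rw [hα]; exact Finset.inf'_le _ (Finset.mem_univ k)
      rw [le_div_iff₀ (hg k xstar)] at h1
      linarith
  have hiff : ∀ x : D,
      (Finset.univ.inf' Finset.univ_nonempty (fun k => f k x - αstar * g k x) ≤ 0)
        ↔ Finset.univ.inf' Finset.univ_nonempty (fun k => f k x / g k x) ≤ αstar :=
    gd_key f g hg αstar
  refine ⟨hzero, ⟨fun h x => (hiff x).2 (hα ▸ h x), fun h x => hα ▸ (hiff x).1 (h x)⟩,
    fun h => ⟨⟨xstar, hzero.symm⟩, ?_⟩⟩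
  rintro r ⟨x, rfl⟩
  exact (hiff x).2 (hα ▸ h x)
end

section
/- (Strictly bounded robust SINR lower bound.) Let M ≥ 1, let I be a finite index set, let σ² > 0, and let W₀ and W_i (i ∈ I) be M×M positive semidefinite Hermitian complex matrices. Let h̃₀, h̃_i ∈ ℂ^M be estimated channels and δ₀, δ_i ≥ 0 uncertainty radii, and set e₀ := δ₀² + 2δ₀‖h̃₀‖₂ and e_i := δ_i² + 2δ_i‖h̃_i‖₂. Assume Re(h̃₀ᴴ W₀ h̃₀) − e₀·‖W₀‖_F ≥ 0. Then for all error vectors ε₀, ε_i ∈ ℂ^M with ‖ε₀‖₂ ≤ δ₀ and ‖ε_i‖₂ ≤ δ_i, writing h₀ := h̃₀ + ε₀ and h_i := h̃_i + ε_i, the SINR satisfies (h₀ᴴ W₀ h₀) / (Σ_{i∈I} h_iᴴ W_i h_i + σ²) ≥ (Re(h̃₀ᴴ W₀ h̃₀) − e₀‖W₀‖_F) / (Σ_{i∈I} (Re(h̃_iᴴ W_i h̃_i) + e_i‖W_i‖_F) + σ²). -/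
open Matrix
open scoped ComplexOrder

/-- Frobenius norm of a square complex matrix: `‖A‖_F = sqrt (Re Tr[Aᴴ A])`. -/
noncomputable def frobNorm {M : ℕ} (A : Matrix (Fin M) (Fin M) ℂ) : ℝ :=
  Real.sqrt ((Aᴴ * A).trace.re)

/-- Euclidean norm of a complex vector. -/
noncomputable def enorm₂ {M : ℕ} (x : Fin M → ℂ) : ℝ :=
  Real.sqrt (∑ i, ‖x i‖ ^ 2)

/-- The (real) quadratic form `Re(hᴴ W h)` of a matrix `W` at a vector `h`. -/
noncomputable def quadForm {M : ℕ} (W : Matrix (Fin M) (Fin M) ℂ)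
    (h : Fin M → ℂ) : ℝ :=
  (dotProduct (star h) (W.mulVec h)).re

/-! Expanding `(h + ε)ᴴ W (h + ε) - hᴴ W h = εᴴ W h + hᴴ W ε + εᴴ W ε` and bounding each term by
`|xᴴ W y| ≤ ‖x‖₂ ‖W‖_F ‖y‖₂` (Cauchy–Schwarz plus submultiplicativity of the Frobenius norm)
shows that the quadratic form moves by at most `(δ² + 2δ‖h‖₂) ‖W‖_F` when `‖ε‖₂ ≤ δ`. This
lowers the desired signal power and raises every interference power by at most that amount; as
the true signal power is nonnegative and the true denominator positive, the ratio only grows. -/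

open scoped Matrix.Norms.Frobenius
open WithLp

theorem norm_star_dotProduct_mulVec_le {𝕜 m n : Type*} [RCLike 𝕜] [Fintype m] [Fintype n]
    (x : m → 𝕜) (W : Matrix m n 𝕜) (y : n → 𝕜) :
    ‖star x ⬝ᵥ W *ᵥ y‖ ≤ ‖toLp 2 x‖ * ‖W‖ * ‖toLp 2 y‖ := by
  have hWy : ‖toLp 2 (W *ᵥ y)‖ ≤ ‖W‖ * ‖toLp 2 y‖ := by
    simpa only [← frobenius_norm_replicateCol (ι := Unit), replicateCol_mulVec]
      using frobenius_norm_mul W (replicateCol Unit y)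
  calc ‖star x ⬝ᵥ W *ᵥ y‖ = ‖inner 𝕜 (toLp 2 x) (toLp 2 (W *ᵥ y))‖ := by
        rw [EuclideanSpace.inner_toLp_toLp, dotProduct_comm]
    _ ≤ ‖toLp 2 x‖ * ‖toLp 2 (W *ᵥ y)‖ := norm_inner_le_norm _ _
    _ ≤ ‖toLp 2 x‖ * (‖W‖ * ‖toLp 2 y‖) := by gcongr
    _ = ‖toLp 2 x‖ * ‖W‖ * ‖toLp 2 y‖ := (mul_assoc _ _ _).symm

section QuadForm

variable {M : ℕ}

theorem enorm₂_eq_norm_toLp (x : Fin M → ℂ) : enorm₂ x = ‖toLp 2 x‖ :=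
  (EuclideanSpace.norm_eq _).symm

theorem frobNorm_eq_norm (A : Matrix (Fin M) (Fin M) ℂ) : frobNorm A = ‖A‖ := by
  rw [frobNorm, frobenius_norm_def, ← Real.sqrt_eq_rpow, trace, Finset.sum_comm]
  simp only [Real.rpow_two, diag_apply, mul_apply, conjTranspose_apply, RCLike.star_def,
    Complex.conj_mul', Complex.re_sum]
  norm_cast

theorem quadForm_nonneg {W : Matrix (Fin M) (Fin M) ℂ} (hW : W.PosSemidef) (h : Fin M → ℂ) :
    0 ≤ quadForm W h :=
  hW.re_dotProduct_nonneg h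

variable (W : Matrix (Fin M) (Fin M) ℂ) (h : Fin M → ℂ)

theorem quadForm_add_sub (ε : Fin M → ℂ) :
    quadForm W (h + ε) - quadForm W h
      = (star ε ⬝ᵥ W *ᵥ h + star h ⬝ᵥ W *ᵥ ε + star ε ⬝ᵥ W *ᵥ ε).re := by
  simp only [quadForm, star_add, mulVec_add, add_dotProduct, dotProduct_add, Complex.add_re]
  ring

theorem abs_quadForm_add_sub_le (ε : Fin M → ℂ) :
    |quadForm W (h + ε) - quadForm W h|
      ≤ (enorm₂ ε ^ 2 + 2 * enorm₂ ε * enorm₂ h) * frobNorm W := by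
  rw [quadForm_add_sub, enorm₂_eq_norm_toLp, enorm₂_eq_norm_toLp, frobNorm_eq_norm]
  calc _ ≤ ‖star ε ⬝ᵥ W *ᵥ h + star h ⬝ᵥ W *ᵥ ε + star ε ⬝ᵥ W *ᵥ ε‖ :=
        Complex.abs_re_le_norm _
    _ ≤ ‖star ε ⬝ᵥ W *ᵥ h‖ + ‖star h ⬝ᵥ W *ᵥ ε‖ + ‖star ε ⬝ᵥ W *ᵥ ε‖ := norm_add₃_le
    _ ≤ ‖toLp 2 ε‖ * ‖W‖ * ‖toLp 2 h‖ + ‖toLp 2 h‖ * ‖W‖ * ‖toLp 2 ε‖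
          + ‖toLp 2 ε‖ * ‖W‖ * ‖toLp 2 ε‖ := by
        gcongr <;> exact norm_star_dotProduct_mulVec_le _ _ _
    _ = _ := by ring

theorem abs_quadForm_add_sub_le_of_enorm₂_le {ε : Fin M → ℂ} {δ : ℝ} (hε : enorm₂ ε ≤ δ) :
    |quadForm W (h + ε) - quadForm W h| ≤ (δ ^ 2 + 2 * δ * enorm₂ h) * frobNorm W := by
  have hε₀ : 0 ≤ enorm₂ ε := Real.sqrt_nonneg _
  have hh : 0 ≤ enorm₂ h := Real.sqrt_nonneg _
  have hW : 0 ≤ frobNorm W := Real.sqrt_nonneg _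
  exact (abs_quadForm_add_sub_le W h ε).trans (by gcongr)

end QuadForm

theorem robust_sinr_lower_bound_general (M : ℕ)
    {I : Type*} [Fintype I] (σsq : ℝ) (hσ : 0 < σsq)
    (W₀ : Matrix (Fin M) (Fin M) ℂ) (hW₀ : W₀.PosSemidef)
    (Wi : I → Matrix (Fin M) (Fin M) ℂ) (hWi : ∀ i, (Wi i).PosSemidef)
    (htil₀ : Fin M → ℂ) (htili : I → Fin M → ℂ)
    (δ₀ : ℝ) (δi : I → ℝ) :
    ∀ (ε₀ : Fin M → ℂ) (εi : I → Fin M → ℂ),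
      enorm₂ ε₀ ≤ δ₀ → (∀ i, enorm₂ (εi i) ≤ δi i) →
      (quadForm W₀ htil₀ - (δ₀ ^ 2 + 2 * δ₀ * enorm₂ htil₀) * frobNorm W₀)
          / (∑ i, (quadForm (Wi i) (htili i)
                + (δi i ^ 2 + 2 * δi i * enorm₂ (htili i)) * frobNorm (Wi i)) + σsq)
        ≤ quadForm W₀ (htil₀ + ε₀)
          / (∑ i, quadForm (Wi i) (htili i + εi i) + σsq) := by
  intro ε₀ εi hε₀ hεi
  have hnum_le : quadForm W₀ htil₀ - (δ₀ ^ 2 + 2 * δ₀ * enorm₂ htil₀) * frobNorm W₀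
      ≤ quadForm W₀ (htil₀ + ε₀) := by
    linarith [(abs_sub_le_iff.1 (abs_quadForm_add_sub_le_of_enorm₂_le W₀ htil₀ hε₀)).2]
  have hden_le : ∀ i, quadForm (Wi i) (htili i + εi i)
      ≤ quadForm (Wi i) (htili i)
        + (δi i ^ 2 + 2 * δi i * enorm₂ (htili i)) * frobNorm (Wi i) := fun i => by
    have := abs_quadForm_add_sub_le_of_enorm₂_le (Wi i) (htili i) (hεi i)
    linarith [(abs_sub_le_iff.1 this).1]
  have hden_pos : 0 < ∑ i, quadForm (Wi i) (htili i + εi i) + σsq :=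
    add_pos_of_nonneg_of_pos (Finset.sum_nonneg fun i _ => quadForm_nonneg (hWi i) _) hσ
  refine div_le_div₀ (quadForm_nonneg hW₀ _) hnum_le hden_pos ?_
  gcongr with i
  exact hden_le i

/-- Strictly bounded robust SINR lower bound (equations (23)–(24) of the
paper): with uncertainty radii `e₀ = δ₀² + 2δ₀‖h̃₀‖₂`, `eᵢ = δᵢ² + 2δᵢ‖h̃ᵢ‖₂`,
and `Re(h̃₀ᴴ W₀ h̃₀) − e₀‖W₀‖_F ≥ 0`, for every realization of the bounded
channel estimation errors the SINR is lower bounded by the worst-case SINR. -/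
theorem robust_sinr_lower_bound (M : ℕ) (hM : 1 ≤ M)
    {I : Type*} [Fintype I] (σsq : ℝ) (hσ : 0 < σsq)
    (W₀ : Matrix (Fin M) (Fin M) ℂ) (hW₀ : W₀.PosSemidef)
    (Wi : I → Matrix (Fin M) (Fin M) ℂ) (hWi : ∀ i, (Wi i).PosSemidef)
    (htil₀ : Fin M → ℂ) (htili : I → Fin M → ℂ)
    (δ₀ : ℝ) (hδ₀ : 0 ≤ δ₀) (δi : I → ℝ) (hδi : ∀ i, 0 ≤ δi i)
    (hnum : 0 ≤ quadForm W₀ htil₀ - (δ₀ ^ 2 + 2 * δ₀ * enorm₂ htil₀) * frobNorm W₀) :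
    ∀ (ε₀ : Fin M → ℂ) (εi : I → Fin M → ℂ),
      enorm₂ ε₀ ≤ δ₀ → (∀ i, enorm₂ (εi i) ≤ δi i) →
      (quadForm W₀ htil₀ - (δ₀ ^ 2 + 2 * δ₀ * enorm₂ htil₀) * frobNorm W₀)
          / (∑ i, (quadForm (Wi i) (htili i)
                + (δi i ^ 2 + 2 * δi i * enorm₂ (htili i)) * frobNorm (Wi i)) + σsq)
        ≤ quadForm W₀ (htil₀ + ε₀)
          / (∑ i, quadForm (Wi i) (htili i + εi i) + σsq) :=
  robust_sinr_lower_bound_general M σsq hσ W₀ hW₀ Wi hWi htil₀ htili δ₀ δi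
end
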